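/- Let ⟨T, Σ, C₁ ⊑ C₂⟩ with Σ = N_C be an EL TBox abduction problem with T in normal form and ⊤-free, Φ its first-order translation, and F = (V,E,s) a Skolem tree with positive labeling l⁺. For any two nodes v₁, v₂ ∈ V such that s(v₁) = sk(t₁) and s(v₂) = sk(t₂) for the same Skolem function sk and some terms t₁, t₂: if l⁺(v₁) and l⁺(v₂) are both nonempty, then l⁺(v₁) = l⁺(v₂). -/
import Mathlib


namespace ELAbd

/-! ### EL concepts, TBoxes, semantics -/

inductive ELConcept : Type where
  | top : ELConcept
  | atom : ℕ → ELConcept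
  | conj : ELConcept → ELConcept → ELConcept
  | ex : ℕ → ELConcept → ELConcept
deriving DecidableEq

abbrev CI := ELConcept × ELConcept
abbrev TBox := Finset CI

structure Interp (α : Type) where
  conc : ℕ → Set α
  role : ℕ → Set (α × α)

def ELConcept.sem {α : Type} (I : Interp α) : ELConcept → Set α
  | .top => Set.univ
  | .atom A => I.conc A
  | .conj C D => C.sem I ∩ D.sem I
  | .ex r C => {d | ∃ e, (d, e) ∈ I.role r ∧ e ∈ C.sem I}

def Models {α : Type} (I : Interp α) (T : TBox) : Prop :=
  ∀ ci ∈ T, ci.1.sem I ⊆ ci.2.sem I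

def Entails (T : TBox) (C D : ELConcept) : Prop :=
  ∀ (α : Type) (I : Interp α), Models I T → C.sem I ⊆ D.sem I

def EntailsCI (T : TBox) (ci : CI) : Prop := Entails T ci.1 ci.2

def TEntails (T T' : TBox) : Prop :=
  ∀ (α : Type) (I : Interp α), Models I T → Models I T'

def TEquiv (T T' : TBox) : Prop := TEntails T T' ∧ TEntails T' T

/-- Equality of concepts modulo the convention that conjunctions are read as
sets (associativity, commutativity, idempotence, `⊤` as empty conjunction). -/
inductive CEq : ELConcept → ELConcept → Prop
  | refl (C) : CEq C C
  | symm {C D} : CEq C D → CEq D C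
  | trans {C D E} : CEq C D → CEq D E → CEq C E
  | congr_conj {C C' D D'} : CEq C C' → CEq D D' → CEq (.conj C D) (.conj C' D')
  | congr_ex {r C C'} : CEq C C' → CEq (.ex r C) (.ex r C')
  | comm (C D) : CEq (.conj C D) (.conj D C)
  | assoc (C D E) : CEq (.conj (.conj C D) E) (.conj C (.conj D E))
  | idem (C) : CEq (.conj C C) C
  | top_unit (C) : CEq (.conj .top C) C

/-- The relation `≼⊓` on concepts. -/
inductive PrecSq : ELConcept → ELConcept → Prop
  | refl (C) : PrecSq C C
  | conjL {C D'} (D'') : PrecSq C D' → PrecSq C (.conj D' D'')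
  | ex (r) {C' D'} : PrecSq C' D' → PrecSq (.ex r C') (.ex r D')

def ELConcept.concNames : ELConcept → Set ℕ
  | .top => ∅
  | .atom A => {A}
  | .conj C D => C.concNames ∪ D.concNames
  | .ex _ C => C.concNames

def ELConcept.roleNames : ELConcept → Set ℕ
  | .top => ∅
  | .atom _ => ∅
  | .conj C D => C.roleNames ∪ D.roleNames
  | .ex r C => {r} ∪ C.roleNames

def ELConcept.size : ELConcept → ℕ
  | .top => 1
  | .atom _ => 1
  | .conj C D => C.size + D.size + 1
  | .ex _ C => C.size + 1

def ELConcept.exCount : ELConcept → ℕ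
  | .top => 0
  | .atom _ => 0
  | .conj C D => C.exCount + D.exCount
  | .ex _ C => C.exCount + 1

def tboxSize (T : TBox) : ℕ := T.sum (fun ci => ci.1.size + ci.2.size)

def tboxConcNames (T : TBox) : Set ℕ :=
  {A | ∃ ci ∈ T, A ∈ ci.1.concNames ∪ ci.2.concNames}

def tboxRoleNames (T : TBox) : Set ℕ :=
  {r | ∃ ci ∈ T, r ∈ ci.1.roleNames ∪ ci.2.roleNames}

/-- Normal form (simultaneously `⊤`-free): every CI has one of the four shapes
`A ⊑ B`, `A₁ ⊓ A₂ ⊑ B`, `∃r.A ⊑ B`, `A ⊑ ∃r.B` with atomic concepts. -/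
def NFci (ci : CI) : Prop :=
  (∃ A B, ci = (ELConcept.atom A, ELConcept.atom B)) ∨
  (∃ A₁ A₂ B, ci = (ELConcept.conj (.atom A₁) (.atom A₂), ELConcept.atom B)) ∨
  (∃ r A B, ci = (ELConcept.ex r (.atom A), ELConcept.atom B)) ∨
  (∃ A r B, ci = (ELConcept.atom A, ELConcept.ex r (.atom B)))

def NormalForm (T : TBox) : Prop := ∀ ci ∈ T, NFci ci

/-- Normal form where the components may also be `⊤`. -/
def AtomTop (C : ELConcept) : Prop := C = .top ∨ ∃ A, C = ELConcept.atom A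

def NFciTop (ci : CI) : Prop :=
  (AtomTop ci.1 ∧ AtomTop ci.2) ∨
  (∃ A₁ A₂, ci.1 = ELConcept.conj A₁ A₂ ∧ AtomTop A₁ ∧ AtomTop A₂ ∧ AtomTop ci.2) ∨
  (∃ r A, ci.1 = ELConcept.ex r A ∧ AtomTop A ∧ AtomTop ci.2) ∨
  (∃ r B, ci.2 = ELConcept.ex r B ∧ AtomTop B ∧ AtomTop ci.1)

def NormalFormTop (T : TBox) : Prop := ∀ ci ∈ T, NFciTop ci

/-! ### EL description trees -/

noncomputable def conjOf (s : Finset ℕ) : ELConcept :=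
  (s.toList.map ELConcept.atom).foldr ELConcept.conj ELConcept.top

structure DescTree where
  V : Finset ℕ
  root : ℕ
  E : Finset (ℕ × ℕ × ℕ)      -- (v, r, w) : edge from v to w labeled r
  label : ℕ → Finset ℕ
  dep : ℕ → ℕ
  root_mem : root ∈ V
  edge_mem : ∀ e ∈ E, e.1 ∈ V ∧ e.2.2 ∈ V
  parent_unique : ∀ e ∈ E, ∀ e' ∈ E, e.2.2 = e'.2.2 → e = e'
  parent_exists : ∀ v ∈ V, v ≠ root → ∃ e ∈ E, e.2.2 = v
  dep_root : dep root = 0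
  dep_edge : ∀ e ∈ E, dep e.2.2 = dep e.1 + 1

noncomputable def DescTree.conceptAt (t : DescTree) : ℕ → ℕ → ELConcept
  | 0, v => conjOf (t.label v)
  | n + 1, v =>
      ((t.label v).toList.map ELConcept.atom ++
        (t.E.filter (fun e => e.1 = v)).toList.map
          (fun e => ELConcept.ex e.2.1 (t.conceptAt n e.2.2))).foldr ELConcept.conj ELConcept.top

/-- The concept `C_𝔗` represented by a description tree. -/
noncomputable def DescTree.concept (t : DescTree) : ELConcept := t.conceptAt t.V.card t.root

/-- `t` is a description tree for the concept `D` (concept equality is taken modulo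
the conjunctions-as-sets convention). -/
def Represents (t : DescTree) (D : ELConcept) : Prop := CEq t.concept D

/-- Weak homomorphism from `src` to `tgt`. -/
def WeakHom (src tgt : DescTree) (φ : ℕ → ℕ) : Prop :=
  φ src.root = tgt.root ∧ ∀ e ∈ src.E, (φ e.1, e.2.1, φ e.2.2) ∈ tgt.E

/-- `T`-homomorphism from `src` to `tgt`. -/
def THom (T : TBox) (src tgt : DescTree) (φ : ℕ → ℕ) : Prop :=
  WeakHom src tgt φ ∧
  ∀ w ∈ src.V, Entails T (conjOf (tgt.label (φ w))) (conjOf (src.label w))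

/-! ### Abduction problems, hypotheses, connection minimality -/

inductive AtomConj (S : Set ℕ) : ELConcept → Prop
  | atom {A} : A ∈ S → AtomConj S (.atom A)
  | conj {C D} : AtomConj S C → AtomConj S D → AtomConj S (.conj C D)

def IsHypothesis (T : TBox) (S : Set ℕ) (C1 C2 : ℕ) (H : TBox) : Prop :=
  (∀ ci ∈ H, (AtomConj S ci.1 ∨ ci.1 = ELConcept.top) ∧ AtomConj S ci.2) ∧
  Entails (T ∪ H) (.atom C1) (.atom C2) ∧
  ∀ ci ∈ H, ¬ EntailsCI T ci

def BuiltOver (S : Set ℕ) (C : ELConcept) : Prop := C.concNames ⊆ S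

/-- The TBox determined by condition (4) of the definition of connection minimality. -/
def hypSetOf (T : TBox) (t1 t2 : DescTree) (φ : ℕ → ℕ) : Set CI :=
  {ci | ∃ w ∈ t2.V, ci = (conjOf (t1.label (φ w)), conjOf (t2.label w)) ∧
        ¬ EntailsCI T ci}

/-- Conditions (1)–(4) of connection minimality, with explicit witnessing
description trees `t1`, `t2` for `D1`, `D2` and the weak homomorphism `φ`
from `𝔗_{D₂}` to `𝔗_{D₁}`. -/
def ConnMinimalWit (T : TBox) (S : Set ℕ) (C1 C2 : ℕ) (H : TBox)
    (D1 D2 : ELConcept) (t1 t2 : DescTree) (φ : ℕ → ℕ) : Prop :=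
  BuiltOver S D1 ∧ BuiltOver S D2 ∧
  Represents t1 D1 ∧ Represents t2 D2 ∧
  Entails T (.atom C1) D1 ∧
  Entails T D2 (.atom C2) ∧
  (∀ D2', Entails T D2' (.atom C2) → PrecSq D2' D2 → PrecSq D2 D2') ∧
  WeakHom t2 t1 φ ∧
  (↑H : Set CI) = hypSetOf T t1 t2 φ

def ConnMinimal (T : TBox) (S : Set ℕ) (C1 C2 : ℕ) (H : TBox) : Prop :=
  IsHypothesis T S C1 C2 H ∧
  ∃ D1 D2 t1 t2 φ, ConnMinimalWit T S C1 C2 H D1 D2 t1 t2 φ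

/-- Packedness of a witness: no alternative `D₁'`, `φ'` (for the same `D₂`, `t₂`)
strictly enlarges one of the left-hand side labels while keeping all others. -/
def PackedWit (T : TBox) (S : Set ℕ) (C1 : ℕ) (t1 t2 : DescTree) (φ : ℕ → ℕ) : Prop :=
  ¬ ∃ (D1' : ELConcept) (t1' : DescTree) (φ' : ℕ → ℕ) (w : ℕ),
      BuiltOver S D1' ∧ Represents t1' D1' ∧ Entails T (.atom C1) D1' ∧
      WeakHom t2 t1' φ' ∧ w ∈ t2.V ∧
      t1.label (φ w) ⊂ t1'.label (φ' w) ∧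
      ∀ w' ∈ t2.V, w' ≠ w → t1.label (φ w') = t1'.label (φ' w')

def PackedConnMinimal (T : TBox) (S : Set ℕ) (C1 C2 : ℕ) (H : TBox) : Prop :=
  IsHypothesis T S C1 C2 H ∧
  ∃ D1 D2 t1 t2 φ, ConnMinimalWit T S C1 C2 H D1 D2 t1 t2 φ ∧
    PackedWit T S C1 t1 t2 φ

/-! ### First-order logic: terms, clauses, semantics -/

/-- Skolem functions: one for each (copy, axiom) pair. -/
abbrev SkFun := Bool × CI

inductive Term : Type where
  | var : ℕ → Term
  | sk0 : Term
  | app : SkFun → Term → Term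
deriving DecidableEq

/-- Ground Skolem terms. -/
inductive GTerm : Type where
  | sk0 : GTerm
  | app : SkFun → GTerm → GTerm
deriving DecidableEq

def GTerm.toTerm : GTerm → Term
  | .sk0 => .sk0
  | .app f t => .app f t.toTerm

def GTerm.depth : GTerm → ℕ
  | .sk0 => 0
  | .app _ t => t.depth + 1

inductive GTerm.Subterm : GTerm → GTerm → Prop
  | refl (t) : GTerm.Subterm t t
  | app {s t} (f) : GTerm.Subterm s t → GTerm.Subterm s (.app f t)

/-- Atoms; unary predicates `(b, A)` where `b = false` marks the original copy of the
atomic concept `A` and `b = true` its duplicate `Ā`. -/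
inductive Atm : Type where
  | conc : (Bool × ℕ) → Term → Atm
  | role : ℕ → Term → Term → Atm
deriving DecidableEq

structure Lit : Type where
  pos : Bool
  atm : Atm
deriving DecidableEq

abbrev Clause := Finset Lit

inductive GAtm : Type where
  | conc : (Bool × ℕ) → GTerm → GAtm
  | role : ℕ → GTerm → GTerm → GAtm
deriving DecidableEq

def GAtm.toAtm : GAtm → Atm
  | .conc P t => .conc P t.toTerm
  | .role r t u => .role r t.toTerm u.toTerm

structure FOInterp (α : Type) where
  c0 : α
  app : SkFun → α → α
  conc : Bool × ℕ → Set α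
  role : ℕ → Set (α × α)

def Term.eval {α : Type} (I : FOInterp α) (ρ : ℕ → α) : Term → α
  | .var x => ρ x
  | .sk0 => I.c0
  | .app f t => I.app f (t.eval I ρ)

def Atm.sat {α : Type} (I : FOInterp α) (ρ : ℕ → α) : Atm → Prop
  | .conc P t => t.eval I ρ ∈ I.conc P
  | .role r t u => (t.eval I ρ, u.eval I ρ) ∈ I.role r

def Lit.sat {α : Type} (I : FOInterp α) (ρ : ℕ → α) (l : Lit) : Prop :=
  if l.pos then l.atm.sat I ρ else ¬ l.atm.sat I ρ

/-- Satisfaction of a clause: the universal closure of the disjunction holds. -/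
def ClauseSat {α : Type} (I : FOInterp α) (c : Clause) : Prop :=
  ∀ ρ : ℕ → α, ∃ l ∈ c, l.sat I ρ

def CModels {α : Type} (I : FOInterp α) (Ψ : Set Clause) : Prop :=
  ∀ c ∈ Ψ, ClauseSat I c

def CEntails (Ψ : Set Clause) (c : Clause) : Prop :=
  ∀ (α : Type) (I : FOInterp α), CModels I Ψ → ClauseSat I c

def ClEntails (c d : Clause) : Prop := CEntails {c} d

def IsPrimeImplicate (Ψ : Set Clause) (c : Clause) : Prop :=
  CEntails Ψ c ∧ ∀ c' : Clause, CEntails Ψ c' → ClEntails c' c → ClEntails c c'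

def Term.vars : Term → Set ℕ
  | .var x => {x}
  | .sk0 => ∅
  | .app _ t => t.vars

def Atm.vars : Atm → Set ℕ
  | .conc _ t => t.vars
  | .role _ t u => t.vars ∪ u.vars

def ClauseVars (c : Clause) : Set ℕ := {x | ∃ l ∈ c, x ∈ l.atm.vars}

def ClauseGround (c : Clause) : Prop := ClauseVars c = ∅
def ClausePositive (c : Clause) : Prop := ∀ l ∈ c, l.pos = true
def ClauseNegative (c : Clause) : Prop := ∀ l ∈ c, l.pos = false

def Atm.inSig (S : Set ℕ) : Atm → Prop
  | .conc P _ => P.2 ∈ S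
  | .role _ _ _ => True

def ClauseInSig (S : Set ℕ) (c : Clause) : Prop := ∀ l ∈ c, l.atm.inSig S

/-- Positive ground prime implicates over `Σ ∪ N_R`. -/
def PIpos (S : Set ℕ) (Ψ : Set Clause) : Set Clause :=
  {c | IsPrimeImplicate Ψ c ∧ ClauseGround c ∧ ClausePositive c ∧ ClauseInSig S c}

/-- Negative ground prime implicates over `Σ ∪ N_R`. -/
def PIneg (S : Set ℕ) (Ψ : Set Clause) : Set Clause :=
  {c | IsPrimeImplicate Ψ c ∧ ClauseGround c ∧ ClauseNegative c ∧ ClauseInSig S c}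

/-- The ground atom `a` belongs (as a unit clause) to `PI^{g+}_Σ(Ψ)`. -/
def InPIpos (S : Set ℕ) (Ψ : Set Clause) (a : GAtm) : Prop :=
  ({⟨true, a.toAtm⟩} : Clause) ∈ PIpos S Ψ

/-! ### Substitutions and resolution -/

def Term.subst (σ : ℕ → Term) : Term → Term
  | .var x => σ x
  | .sk0 => .sk0
  | .app f t => .app f (t.subst σ)

def Atm.subst (σ : ℕ → Term) : Atm → Atm
  | .conc P t => .conc P (t.subst σ)
  | .role r t u => .role r (t.subst σ) (u.subst σ)

def Lit.subst (σ : ℕ → Term) (l : Lit) : Lit := ⟨l.pos, l.atm.subst σ⟩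

def ClauseSubst (σ : ℕ → Term) (c : Clause) : Clause := c.image (Lit.subst σ)

def IsUnifier (σ : ℕ → Term) (a b : Atm) : Prop := a.subst σ = b.subst σ

def IsMGU (σ : ℕ → Term) (a b : Atm) : Prop :=
  IsUnifier σ a b ∧ ∀ τ, IsUnifier τ a b → ∃ δ, ∀ x, (σ x).subst δ = τ x

/-- Resolution derivations from `Ψ`, where every resolvent must satisfy `ok`. -/
inductive Deriv (Ψ : Set Clause) (ok : Clause → Prop) : Clause → Prop
  | hyp {c : Clause} : c ∈ Ψ → Deriv Ψ ok c
  | res {c₁ c₂ : Clause} {a b : Atm} {σ : ℕ → Term} :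
      Deriv Ψ ok c₁ → Deriv Ψ ok c₂ →
      (⟨true, a⟩ : Lit) ∈ c₁ → (⟨false, b⟩ : Lit) ∈ c₂ → IsMGU σ a b →
      ok (ClauseSubst σ (c₁.erase ⟨true, a⟩ ∪ c₂.erase ⟨false, b⟩)) →
      Deriv Ψ ok (ClauseSubst σ (c₁.erase ⟨true, a⟩ ∪ c₂.erase ⟨false, b⟩))
  | factor {c : Clause} {l₁ l₂ : Lit} {σ : ℕ → Term} :
      Deriv Ψ ok c → l₁ ∈ c → l₂ ∈ c → l₁ ≠ l₂ → l₁.pos = l₂.pos →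
      IsMGU σ l₁.atm l₂.atm →
      ok (ClauseSubst σ (c.erase l₂)) →
      Deriv Ψ ok (ClauseSubst σ (c.erase l₂))

/-! ### The translation Φ of an abduction problem -/

def vx : Term := .var 0
def vy : Term := .var 1
def pcl (b : Bool) (A : ℕ) (t : Term) : Lit := ⟨true, .conc (b, A) t⟩
def ncl (b : Bool) (A : ℕ) (t : Term) : Lit := ⟨false, .conc (b, A) t⟩
def prl (r : ℕ) (t u : Term) : Lit := ⟨true, .role r t u⟩
def nrl (r : ℕ) (t u : Term) : Lit := ⟨false, .role r t u⟩

def clausesOf (b : Bool) (ci : CI) : Set Clause :=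
  match ci with
  | (.atom A, .atom B) => {({ncl b A vx, pcl b B vx} : Clause)}
  | (.conj (.atom A₁) (.atom A₂), .atom B) =>
      {({ncl b A₁ vx, ncl b A₂ vx, pcl b B vx} : Clause)}
  | (.ex r (.atom A), .atom B) =>
      {({nrl r vx vy, ncl b A vy, pcl b B vx} : Clause)}
  | (.atom A, .ex r (.atom B)) =>
      {({ncl b A vx, prl r vx (.app (b, (.atom A, .ex r (.atom B))) vx)} : Clause),
       ({ncl b A vx, pcl b B (.app (b, (.atom A, .ex r (.atom B))) vx)} : Clause)}
  | _ => ∅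

/-- The clausal translation `Φ` of the abduction problem `⟨T, Σ, C₁ ⊑ C₂⟩`. -/
def Translation (T : TBox) (C1 C2 : ℕ) : Set Clause :=
  (⋃ ci ∈ T, clausesOf false ci ∪ clausesOf true ci) ∪
  {({pcl false C1 .sk0} : Clause), ({ncl true C2 .sk0} : Clause)}

/-- The presaturation `Φ_p` of a clause set. -/
def presat (Ψ : Set Clause) : Set Clause :=
  Ψ ∪ {c | ∃ (b : Bool) (A B : ℕ),
        c = ({ncl b A vx, pcl b B vx} : Clause) ∧ CEntails Ψ c}

/-! ### Herbrand interpretations -/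

def herb (S : Set GAtm) : FOInterp GTerm where
  c0 := .sk0
  app := .app
  conc := fun P => {t | GAtm.conc P t ∈ S}
  role := fun r => {p | GAtm.role r p.1 p.2 ∈ S}

def HModels (S : Set GAtm) (Ψ : Set Clause) : Prop := CModels (herb S) Ψ

def piPosAtoms (S : Set ℕ) (Ψ : Set Clause) : Set GAtm := {a | InPIpos S Ψ a}

/-- EL semantics of a concept in a Herbrand interpretation (original predicates). -/
def gsem (I : Set GAtm) : ELConcept → Set GTerm
  | .top => Set.univ
  | .atom A => {t | GAtm.conc (false, A) t ∈ I}
  | .conj C D => gsem I C ∩ gsem I D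
  | .ex r C => {t | ∃ u, GAtm.role r t u ∈ I ∧ u ∈ gsem I C}

/-! ### Canonical models of description trees -/

/-- The canonical model `I^c(sl)` of a description tree with Skolem labeling `sl`. -/
def canonModel (t : DescTree) (sl : ℕ → GTerm) : Set GAtm :=
  {a | ∃ e ∈ t.E, a = GAtm.role e.2.1 (sl e.1) (sl e.2.2)} ∪
  {a | ∃ v ∈ t.V, ∃ A ∈ t.label v, a = GAtm.conc (false, A) (sl v)}

/-- The unary-predicate part `I^c_A(sl)` of the canonical model, as labelled pairs. -/
def canonA (t : DescTree) (sl : ℕ → GTerm) : Set (ℕ × GTerm) :=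
  {p | ∃ v ∈ t.V, p.1 ∈ t.label v ∧ p.2 = sl v}

/-- The clause `⋁_{v ∈ V₂, B ∈ l₂(v)} ¬B̄(sl v)`. -/
def negTreeClause (t : DescTree) (sl : ℕ → GTerm) : Clause :=
  t.V.biUnion (fun v =>
    (t.label v).image (fun B => (⟨false, Atm.conc (true, B) (sl v).toTerm⟩ : Lit)))

/-! ### Constructible hypotheses -/

def negClauseOf (B : Finset (ℕ × GTerm)) : Clause :=
  B.image (fun p => (⟨false, Atm.conc (true, p.1) p.2.toTerm⟩ : Lit))

def posUnit (p : ℕ × GTerm) : Clause := {⟨true, Atm.conc (false, p.1) p.2.toTerm⟩}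

/-- `C_{X,t} = ⊓{A | A(t) ∈ X}`. -/
noncomputable def CAt (X : Finset (ℕ × GTerm)) (t : GTerm) : ELConcept :=
  conjOf ((X.filter (fun p => p.2 = t)).image Prod.fst)

/-- `H` is the hypothesis constructed from the sets `A` and `B` of ground atoms. -/
def ConstructibleVia (S : Set ℕ) (Ψ : Set Clause)
    (A B : Finset (ℕ × GTerm)) (H : TBox) : Prop :=
  A.Nonempty ∧ B.Nonempty ∧
  negClauseOf B ∈ PIneg S Ψ ∧
  (∀ p ∈ B, ∃ a, InPIpos S Ψ (GAtm.conc (false, a) p.2)) ∧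
  ((↑A : Set (ℕ × GTerm)) =
    {q | InPIpos S Ψ (GAtm.conc (false, q.1) q.2) ∧ ∃ p ∈ B, p.2 = q.2}) ∧
  ((↑H : Set CI) =
    {ci | ∃ p ∈ B, ci = (CAt A p.2, CAt B p.2) ∧ ¬ PrecSq (CAt B p.2) (CAt A p.2)})

def Constructible (S : Set ℕ) (Ψ : Set Clause) (H : TBox) : Prop :=
  ∃ A B, ConstructibleVia S Ψ A B H

/-! ### Clause shapes I3–I7, signature counts -/

def isI3 (c : Clause) : Prop :=
  ∃ P Q : Bool × ℕ, c = ({⟨false, .conc P vx⟩, ⟨true, .conc Q vx⟩} : Clause)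

def isI4 (c : Clause) : Prop :=
  ∃ P₁ P₂ Q : Bool × ℕ,
    c = ({⟨false, .conc P₁ vx⟩, ⟨false, .conc P₂ vx⟩, ⟨true, .conc Q vx⟩} : Clause)

def isI5 (c : Clause) : Prop :=
  ∃ (r : ℕ) (P Q : Bool × ℕ),
    c = ({⟨false, .role r vx vy⟩, ⟨false, .conc P vy⟩, ⟨true, .conc Q vx⟩} : Clause)

def isI7 (c : Clause) : Prop :=
  ∃ (P Q : Bool × ℕ) (f : SkFun),
    c = ({⟨false, .conc P vx⟩, ⟨true, .conc Q (.app f vx)⟩} : Clause)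

/-- The atomic concept `A_sk` occurring positively in the I7-clause introducing `sk`
(as a predicate, with the copy flag of `sk`). -/
def skHeadPred (f : SkFun) : Bool × ℕ :=
  (f.1, match f.2.2 with
        | .ex _ (.atom B) => B
        | _ => 0)

def Term.funs : Term → Set SkFun
  | .var _ => ∅
  | .sk0 => ∅
  | .app f t => insert f t.funs

def Atm.funs : Atm → Set SkFun
  | .conc _ t => t.funs
  | .role _ t u => t.funs ∪ u.funs

def clauseFuns (c : Clause) : Set SkFun := {f | ∃ l ∈ c, f ∈ l.atm.funs}

def clauseConcs (c : Clause) : Set (Bool × ℕ) := {P | ∃ l ∈ c, ∃ t, l.atm = Atm.conc P t}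

/-- The number of atomic concepts occurring in a clause set. -/
noncomputable def numConcs (Ψ : Set Clause) : ℕ := Set.ncard {P | ∃ c ∈ Ψ, P ∈ clauseConcs c}

/-- The number of occurrences of existential role restrictions in a TBox. -/
def exOccs (T : TBox) : ℕ := T.sum (fun ci => ci.1.exCount + ci.2.exCount)

/-- The number of Skolem functions occurring in `Ψ` introduced for the original copy. -/
noncomputable def numOrigSk (Ψ : Set Clause) : ℕ :=
  Set.ncard {f : SkFun | f.1 = false ∧ ∃ c ∈ Ψ, f ∈ clauseFuns c}

def unitC (P : Bool × ℕ) (t : GTerm) : Clause := {⟨true, .conc P t.toTerm⟩}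
def negUnitC (P : Bool × ℕ) (t : GTerm) : Clause := {⟨false, .conc P t.toTerm⟩}

/-! ### Skolem trees and solution trees -/

structure SkolemTree where
  V : Finset ℕ
  root : ℕ
  E : Finset (ℕ × ℕ)
  s : ℕ → GTerm
  dep : ℕ → ℕ
  root_mem : root ∈ V
  s_root : s root = .sk0
  edge_mem : ∀ e ∈ E, e.1 ∈ V ∧ e.2 ∈ V
  edge_term : ∀ e ∈ E, s e.2 = s e.1 ∨ ∃ f, s e.2 = GTerm.app f (s e.1)
  parent_unique : ∀ e ∈ E, ∀ e' ∈ E, e.2 = e'.2 → e = e'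
  parent_exists : ∀ v ∈ V, v ≠ root → ∃ e ∈ E, e.2 = v
  dep_root : dep root = 0
  dep_edge : ∀ e ∈ E, dep e.2 = dep e.1 + 1

/-- `v` is an ancestor of `w` (every node is an ancestor of itself). -/
def SkolemTree.Ancestor (F : SkolemTree) (v w : ℕ) : Prop :=
  Relation.ReflTransGen (fun a b => (a, b) ∈ F.E) v w

/-- The descendants of `v` (the nodes of the subtree under `v`). -/
def SkolemTree.Desc (F : SkolemTree) (v : ℕ) : Set ℕ := {w | F.Ancestor v w}

/-- The positive labeling `l⁺`. -/
def posLab (Ψ : Set Clause) (F : SkolemTree) (v : ℕ) : Set ℕ :=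
  {A | InPIpos Set.univ Ψ (GAtm.conc (false, A) (F.s v))}

def SkolemTree.children (F : SkolemTree) (v : ℕ) : Finset ℕ :=
  (F.E.filter (fun e => e.1 = v)).image Prod.snd

def SkolemTree.leaves (F : SkolemTree) : Finset ℕ :=
  F.V.filter (fun v => F.E.filter (fun e => e.1 = v) = ∅)

/-- The unit role facts `{r(t, sk(t)) ∈ PI^{g+}}`. -/
def roleFacts (Ψ : Set Clause) : Set Clause :=
  {c | (∃ (r : ℕ) (t : GTerm) (f : SkFun),
        c = ({⟨true, Atm.role r t.toTerm (GTerm.app f t).toTerm⟩} : Clause)) ∧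
       c ∈ PIpos Set.univ Ψ}

def nonGroundOf (Ψ : Set Clause) : Set Clause := {c | c ∈ Ψ ∧ ¬ ClauseGround c}

/-- Negative labeling `l⁻` for a Skolem tree (labels are duplicate concept names,
recorded by their underlying name in `N_C`). -/
def IsNegLabeling (Ψ : Set Clause) (C2 : ℕ) (F : SkolemTree) (ln : ℕ → ℕ) : Prop :=
  ln F.root = C2 ∧
  ∀ v ∈ F.V, F.children v ≠ ∅ →
    Deriv ({negUnitC (true, ln v) (F.s v)} ∪ roleFacts Ψ ∪ nonGroundOf (presat Ψ))
      (fun _ => True)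
      ((F.children v).image
        (fun w => (⟨false, Atm.conc (true, ln w) (F.s w).toTerm⟩ : Lit)))

/-- The clause `φ_{F,l⁻}` determined by the leaves.  (Clauses are finite sets of
literals, so it is automatically considered up to repetition of literals.) -/
def leavesClause (F : SkolemTree) (ln : ℕ → ℕ) : Clause :=
  F.leaves.image (fun v => (⟨false, Atm.conc (true, ln v) (F.s v).toTerm⟩ : Lit))

def IsSolutionTree (Ψ : Set Clause) (C2 : ℕ) (F : SkolemTree) (ln : ℕ → ℕ) : Prop :=
  (∀ v ∈ F.V, (posLab Ψ F v).Nonempty) ∧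
  IsNegLabeling Ψ C2 F ln ∧
  leavesClause F ln ∈ PIneg Set.univ Ψ ∧
  ∃ (A B : Finset (ℕ × GTerm)) (H : TBox),
    ConstructibleVia Set.univ Ψ A B H ∧
    (↑B : Set (ℕ × GTerm)) = {p | ∃ v ∈ F.leaves, p = (ln v, F.s v)}

/-- The solution `{⊓l⁺(v) ⊑ l⁻(v) | v a leaf}` of a solution tree. -/
def treeSol (Ψ : Set Clause) (F : SkolemTree) (ln : ℕ → ℕ) : Set CI :=
  {ci | ∃ v ∈ F.leaves, ∃ s : Finset ℕ, (↑s : Set ℕ) = posLab Ψ F v ∧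
        ci = (conjOf s, ELConcept.atom (ln v))}

/-- Minimality: no solution tree with strictly fewer nodes has a solution
included in the solution of this one. -/
def MinimalSolutionTree (Ψ : Set Clause) (C2 : ℕ) (F : SkolemTree) (ln : ℕ → ℕ) : Prop :=
  IsSolutionTree Ψ C2 F ln ∧
  ∀ (F' : SkolemTree) (ln' : ℕ → ℕ),
    IsSolutionTree Ψ C2 F' ln' →
    treeSol Ψ F' ln' ⊆ treeSol Ψ F ln →
    F.V.card ≤ F'.V.card

/-- Replace the (unique) occurrence of `old` as a suffix of a ground term by `new`. -/
def GTerm.replaceSuffix (old new : GTerm) : GTerm → GTerm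
  | .sk0 => if GTerm.sk0 = old then new else .sk0
  | .app f u => if GTerm.app f u = old then new else .app f (GTerm.replaceSuffix old new u)


/-! ### Auxiliary development for STATEMENT 15 -/

/-- The minimal Herbrand model of the translation. -/
inductive MinM (T : TBox) (C1 : ℕ) : GAtm → Prop
  | base : MinM T C1 (.conc (false, C1) .sk0)
  | subAtom {A B : ℕ} {b : Bool} {t : GTerm} :
      ((ELConcept.atom A, ELConcept.atom B) : CI) ∈ T →
      MinM T C1 (.conc (b, A) t) → MinM T C1 (.conc (b, B) t)
  | subConj {A₁ A₂ B : ℕ} {b : Bool} {t : GTerm} :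
      ((ELConcept.conj (.atom A₁) (.atom A₂), ELConcept.atom B) : CI) ∈ T →
      MinM T C1 (.conc (b, A₁) t) → MinM T C1 (.conc (b, A₂) t) →
      MinM T C1 (.conc (b, B) t)
  | subEx {r A B : ℕ} {b : Bool} {t u : GTerm} :
      ((ELConcept.ex r (.atom A), ELConcept.atom B) : CI) ∈ T →
      MinM T C1 (.role r t u) → MinM T C1 (.conc (b, A) u) →
      MinM T C1 (.conc (b, B) t)
  | mkRole {A r B : ℕ} {b : Bool} {t : GTerm} :
      ((ELConcept.atom A, ELConcept.ex r (.atom B)) : CI) ∈ T →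
      MinM T C1 (.conc (b, A) t) →
      MinM T C1 (.role r t (.app (b, (.atom A, .ex r (.atom B))) t))
  | mkConc {A r B : ℕ} {b : Bool} {t : GTerm} :
      ((ELConcept.atom A, ELConcept.ex r (.atom B)) : CI) ∈ T →
      MinM T C1 (.conc (b, A) t) →
      MinM T C1 (.conc (b, B) (.app (b, (.atom A, .ex r (.atom B))) t))

/-- Evaluation of a ground Skolem term in a FO interpretation. -/
def gev {α : Type} (I : FOInterp α) : GTerm → α
  | .sk0 => I.c0
  | .app f t => I.app f (gev I t)

lemma eval_toTerm {α : Type} (I : FOInterp α) (ρ : ℕ → α) (t : GTerm) :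
    (t.toTerm).eval I ρ = gev I t := by
  induction t <;> simp [GTerm.toTerm, Term.eval, gev, *]

/-- Syntactic ground evaluation of a term under a ground substitution. -/
def tgev (ρ : ℕ → GTerm) : Term → GTerm
  | .var x => ρ x
  | .sk0 => .sk0
  | .app f t => .app f (tgev ρ t)

lemma eval_herb (S : Set GAtm) (ρ : ℕ → GTerm) (w : Term) :
    w.eval (herb S) ρ = tgev ρ w := by
  induction w <;> simp only [Term.eval, tgev, *] <;> rfl

/-- Syntactic ground evaluation of an atom. -/
def agev (ρ : ℕ → GTerm) : Atm → GAtm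
  | .conc P t => .conc P (tgev ρ t)
  | .role r t u => .role r (tgev ρ t) (tgev ρ u)

lemma sat_herb (S : Set GAtm) (ρ : ℕ → GTerm) (a : Atm) :
    a.sat (herb S) ρ ↔ agev ρ a ∈ S := by
  cases a <;> simp only [Atm.sat, agev, eval_herb] <;> exact Iff.rfl

lemma tgev_toTerm (ρ : ℕ → GTerm) (t : GTerm) : tgev ρ t.toTerm = t := by
  induction t <;> simp [GTerm.toTerm, tgev, *]

lemma agev_toAtm (ρ : ℕ → GTerm) (a : GAtm) : agev ρ a.toAtm = a := by
  cases a <;> simp [GAtm.toAtm, agev, tgev_toTerm]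

lemma toTerm_vars (t : GTerm) : (GTerm.toTerm t).vars = ∅ := by
  induction t <;> simp [GTerm.toTerm, Term.vars, *]

/-- ground terms occurring in facts of the minimal model -/
inductive GoodT : GTerm → Prop
  | sk0 : GoodT .sk0
  | app {b : Bool} {A r B : ℕ} {t : GTerm} :
      GoodT t → GoodT (.app (b, (ELConcept.atom A, ELConcept.ex r (.atom B))) t)

def GoodA : GAtm → Prop
  | .conc _ t => GoodT t
  | .role _ t u => GoodT t ∧ GoodT u

lemma MinM_good {T : TBox} {C1 : ℕ} {a : GAtm} (h : MinM T C1 a) : GoodA a := by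
  induction h with
  | base => exact GoodT.sk0
  | subAtom _ _ ih => exact ih
  | subConj _ _ _ ih _ => exact ih
  | subEx _ _ _ ihr _ => exact ihr.1
  | mkRole _ _ ih => exact ⟨ih, GoodT.app ih⟩
  | mkConc _ _ ih => exact GoodT.app ih

lemma GoodT.subterm {t : GTerm} (h : GoodT t) : ∀ s, GTerm.Subterm s t → GoodT s := by
  induction h with
  | sk0 => intro s hs; cases hs; exact GoodT.sk0
  | app hg ih =>
      intro s hs
      cases hs with
      | refl => exact GoodT.app hg
      | app _ hs' => exact ih _ hs'

lemma not_good_garbage :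
    ¬ GoodT (GTerm.app (true, (ELConcept.top, ELConcept.top)) GTerm.sk0) := by
  intro h; cases h

lemma subterm_depth {s t : GTerm} (h : GTerm.Subterm s t) : s.depth ≤ t.depth := by
  induction h with
  | refl => exact le_refl _
  | app f _ ih => exact ih.trans (Nat.le_succ _)

lemma tgev_cases (g : GTerm) (w : Term) :
    (∃ gt : GTerm, w = gt.toTerm) ∨ GTerm.Subterm g (tgev (fun _ => g) w) := by
  induction w with
  | var x => exact Or.inr (GTerm.Subterm.refl g)
  | sk0 => exact Or.inl ⟨.sk0, rfl⟩
  | app f t ih =>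
      rcases ih with ⟨gt, rfl⟩ | hs
      · exact Or.inl ⟨.app f gt, rfl⟩
      · exact Or.inr (GTerm.Subterm.app f hs)

/-- Inversion data for facts at non-root terms. -/
def HeadP (T : TBox) (C1 : ℕ) : GAtm → Prop
  | .conc _ t => ∀ f s, t = GTerm.app f s →
      ∃ A r B, f.2 = (ELConcept.atom A, ELConcept.ex r (.atom B)) ∧
        MinM T C1 (.conc (f.1, A) s)
  | .role _ t u => (∃ f, u = GTerm.app f t) ∧
      (∀ f s, t = GTerm.app f s →
        ∃ A r B, f.2 = (ELConcept.atom A, ELConcept.ex r (.atom B)) ∧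
          MinM T C1 (.conc (f.1, A) s))

lemma MinM_head {T : TBox} {C1 : ℕ} {a : GAtm} (h : MinM T C1 a) : HeadP T C1 a := by
  induction h with
  | base => intro f s hfs; cases hfs
  | subAtom _ _ ih => exact ih
  | subConj _ _ _ ih _ => exact ih
  | subEx _ _ _ ihr _ => exact ihr.2
  | mkRole _ hA ih => exact ⟨⟨_, rfl⟩, ih⟩
  | mkConc hT hA _ =>
      intro f s hfs
      obtain ⟨h1, h2⟩ : f = _ ∧ s = _ := by
        injection hfs with h1 h2; exact ⟨h1.symm, h2.symm⟩
      subst h1; subst h2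
      exact ⟨_, _, _, rfl, hA⟩

/-- Transfer of facts along replacement of the root of a subtree. -/
def RepP (T : TBox) (C1 : ℕ) (sk : SkFun) (t₁ t₂ : GTerm) : GAtm → Prop
  | .conc P t => GTerm.Subterm (.app sk t₁) t →
      MinM T C1 (.conc P (GTerm.replaceSuffix (.app sk t₁) (.app sk t₂) t))
  | .role r t u => GTerm.Subterm (.app sk t₁) t →
      MinM T C1 (.role r (GTerm.replaceSuffix (.app sk t₁) (.app sk t₂) t)
        (GTerm.replaceSuffix (.app sk t₁) (.app sk t₂) u))

lemma rep_app_ne {sk : SkFun} {t₁ t₂ : GTerm} {f : SkFun} {t : GTerm}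
    (h : GTerm.Subterm (.app sk t₁) t) :
    GTerm.replaceSuffix (.app sk t₁) (.app sk t₂) (.app f t)
      = .app f (GTerm.replaceSuffix (.app sk t₁) (.app sk t₂) t) := by
  have hne : GTerm.app f t ≠ GTerm.app sk t₁ := by
    intro he
    injection he with h1 h2
    subst h2
    have := subterm_depth h
    simp [GTerm.depth] at this
  simp [GTerm.replaceSuffix, hne]

lemma MinM_rep {T : TBox} {C1 : ℕ} {sk : SkFun} {t₁ t₂ : GTerm} {A0 r0 B0 : ℕ}
    (hsk : sk.2 = (ELConcept.atom A0, ELConcept.ex r0 (.atom B0)))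
    (H2 : MinM T C1 (.conc (sk.1, A0) t₂)) :
    ∀ {a : GAtm}, MinM T C1 a → RepP T C1 sk t₁ t₂ a := by
  intro a h
  induction h with
  | base => intro hs; cases hs
  | @subAtom A B b t hT _ ih =>
      intro hs; exact MinM.subAtom hT (ih hs)
  | @subConj A₁ A₂ B b t hT _ _ ih₁ ih₂ =>
      intro hs; exact MinM.subConj hT (ih₁ hs) (ih₂ hs)
  | @subEx r A B b t u hT hrole hconc ihr ihc =>
      intro hs
      obtain ⟨⟨f, rfl⟩, -⟩ := MinM_head hrole
      exact MinM.subEx hT (ihr hs) (ihc (GTerm.Subterm.app f hs))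
  | @mkRole A r B b t hT hA ih =>
      intro hs
      have := MinM.mkRole hT (ih hs)
      rwa [← rep_app_ne hs] at this
  | @mkConc A r B b t hT hA ih =>
      intro hs
      cases hs with
      | refl =>
          have hci : (ELConcept.atom A, ELConcept.ex r (.atom B))
              = (ELConcept.atom A0, ELConcept.ex r0 (.atom B0)) := hsk
          obtain ⟨hA0, hr0, hB0⟩ : A = A0 ∧ r = r0 ∧ B = B0 := by
            injection hci with x y
            injection x with x1
            injection y with y1 y2
            injection y2 with y3
            exact ⟨x1, y1, y3⟩
          subst hA0; subst hr0; subst hB0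
          simp only [GTerm.replaceSuffix, if_pos rfl]
          exact MinM.mkConc hT H2
      | app _ hs' =>
          have := MinM.mkConc hT (ih hs')
          rwa [← rep_app_ne hs'] at this

/-- No duplicate-copy concept fact is ever derivable. -/
def NotTrueA : GAtm → Prop
  | .conc Q _ => Q.1 = false
  | .role _ _ _ => True

lemma MinM_false {T : TBox} {C1 : ℕ} {a : GAtm} (h : MinM T C1 a) : NotTrueA a := by
  induction h with
  | base => rfl
  | subAtom _ _ ih => exact ih
  | subConj _ _ _ ih _ => exact ih
  | subEx _ _ _ _ ihc => exact ihc
  | mkRole => trivial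
  | mkConc _ _ ih => exact ih

lemma clausesOf_cases {b : Bool} {ci : CI} {c : Clause} (hc : c ∈ clausesOf b ci) :
    (∃ A B, ci = (ELConcept.atom A, ELConcept.atom B) ∧
        c = ({ncl b A vx, pcl b B vx} : Clause)) ∨
    (∃ A₁ A₂ B, ci = (ELConcept.conj (.atom A₁) (.atom A₂), ELConcept.atom B) ∧
        c = ({ncl b A₁ vx, ncl b A₂ vx, pcl b B vx} : Clause)) ∨
    (∃ r A B, ci = (ELConcept.ex r (.atom A), ELConcept.atom B) ∧
        c = ({nrl r vx vy, ncl b A vy, pcl b B vx} : Clause)) ∨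
    (∃ A r B, ci = (ELConcept.atom A, ELConcept.ex r (.atom B)) ∧
        (c = ({ncl b A vx, prl r vx (.app (b, (.atom A, .ex r (.atom B))) vx)} : Clause) ∨
         c = ({ncl b A vx, pcl b B (.app (b, (.atom A, .ex r (.atom B))) vx)} : Clause))) := by
  unfold clausesOf at hc
  split at hc
  · exact Or.inl ⟨_, _, rfl, by simpa using hc⟩
  · exact Or.inr (Or.inl ⟨_, _, _, rfl, by simpa using hc⟩)
  · exact Or.inr (Or.inr (Or.inl ⟨_, _, _, rfl, by simpa using hc⟩))
  · exact Or.inr (Or.inr (Or.inr ⟨_, _, _, rfl, by simpa using hc⟩))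
  · simp at hc

lemma clausesOf_subset {T : TBox} {C1 C2 : ℕ} {ci : CI} (hci : ci ∈ T) (b : Bool) :
    clausesOf b ci ⊆ Translation T C1 C2 := by
  intro c hc
  refine Or.inl ?_
  simp only [Set.mem_iUnion]
  refine ⟨ci, hci, ?_⟩
  cases b
  · exact Or.inl hc
  · exact Or.inr hc

lemma hM_models (T : TBox) (C1 C2 : ℕ) :
    CModels (herb {a | MinM T C1 a}) (Translation T C1 C2) := by
  intro c hc
  rcases hc with hc | hc
  · simp only [Set.mem_iUnion] at hc
    obtain ⟨ci, hci, hc⟩ := hc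
    have main : ∀ b, c ∈ clausesOf b ci → ClauseSat (herb {a | MinM T C1 a}) c := by
      intro b hc
      rcases clausesOf_cases hc with ⟨A, B, hci2, rfl⟩ | ⟨A₁, A₂, B, hci2, rfl⟩ |
        ⟨r, A, B, hci2, rfl⟩ | ⟨A, r, B, hci2, hcc⟩
      · subst hci2
        intro ρ
        by_cases h : MinM T C1 (.conc (b, A) (ρ 0))
        · refine ⟨pcl b B (vx), by simp, ?_⟩
          simp only [Lit.sat, pcl, if_true, sat_herb, agev, tgev, vx, Set.mem_setOf_eq]
          exact MinM.subAtom hci h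
        · refine ⟨ncl b A (vx), by simp, ?_⟩
          simp only [Lit.sat, ncl, if_false, sat_herb, agev, tgev, vx, Set.mem_setOf_eq]
          exact h
      · subst hci2
        intro ρ
        by_cases h1 : MinM T C1 (.conc (b, A₁) (ρ 0))
        · by_cases h2 : MinM T C1 (.conc (b, A₂) (ρ 0))
          · refine ⟨pcl b B (vx), by simp, ?_⟩
            simp only [Lit.sat, pcl, if_true, sat_herb, agev, tgev, vx, Set.mem_setOf_eq]
            exact MinM.subConj hci h1 h2
          · refine ⟨ncl b A₂ (vx), by simp, ?_⟩
            simp only [Lit.sat, ncl, if_false, sat_herb, agev, tgev, vx, Set.mem_setOf_eq]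
            exact h2
        · refine ⟨ncl b A₁ (vx), by simp, ?_⟩
          simp only [Lit.sat, ncl, if_false, sat_herb, agev, tgev, vx, Set.mem_setOf_eq]
          exact h1
      · subst hci2
        intro ρ
        by_cases hR : MinM T C1 (.role r (ρ 0) (ρ 1))
        · by_cases hA : MinM T C1 (.conc (b, A) (ρ 1))
          · refine ⟨pcl b B (vx), by simp, ?_⟩
            simp only [Lit.sat, pcl, if_true, sat_herb, agev, tgev, vx, Set.mem_setOf_eq]
            exact MinM.subEx hci hR hA
          · refine ⟨ncl b A (vy), by simp, ?_⟩
            simp only [Lit.sat, ncl, if_false, sat_herb, agev, tgev, vy, Set.mem_setOf_eq]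
            exact hA
        · refine ⟨nrl r (vx) (vy), by simp, ?_⟩
          simp only [Lit.sat, nrl, if_false, sat_herb, agev, tgev, vx, vy, Set.mem_setOf_eq]
          exact hR
      · subst hci2
        rcases hcc with rfl | rfl
        · intro ρ
          by_cases h : MinM T C1 (.conc (b, A) (ρ 0))
          · refine ⟨prl r (vx) (.app (b, (.atom A, .ex r (.atom B))) (vx)), by simp, ?_⟩
            simp only [Lit.sat, prl, if_true, sat_herb, agev, tgev, vx, Set.mem_setOf_eq]
            exact MinM.mkRole hci h
          · refine ⟨ncl b A (vx), by simp, ?_⟩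
            simp only [Lit.sat, ncl, if_false, sat_herb, agev, tgev, vx, Set.mem_setOf_eq]
            exact h
        · intro ρ
          by_cases h : MinM T C1 (.conc (b, A) (ρ 0))
          · refine ⟨pcl b B (.app (b, (.atom A, .ex r (.atom B))) (vx)), by simp, ?_⟩
            simp only [Lit.sat, pcl, if_true, sat_herb, agev, tgev, vx, Set.mem_setOf_eq]
            exact MinM.mkConc hci h
          · refine ⟨ncl b A (vx), by simp, ?_⟩
            simp only [Lit.sat, ncl, if_false, sat_herb, agev, tgev, vx, Set.mem_setOf_eq]
            exact h
    rcases hc with hc | hc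
    · exact main false hc
    · exact main true hc
  · rcases hc with rfl | hc
    · intro ρ
      refine ⟨pcl false C1 .sk0, by simp, ?_⟩
      simp only [Lit.sat, pcl, if_true, sat_herb, agev, tgev, Set.mem_setOf_eq]
      exact MinM.base
    · rw [Set.mem_singleton_iff] at hc
      subst hc
      intro ρ
      refine ⟨ncl true C2 .sk0, by simp, ?_⟩
      simp only [Lit.sat, ncl, if_false, sat_herb, agev, tgev, Set.mem_setOf_eq]
      intro hmem
      exact absurd (MinM_false hmem) (by simp [NotTrueA])

/-- semantic value of a ground atom -/
def satG {α : Type} (I : FOInterp α) : GAtm → Prop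
  | .conc Q t => gev I t ∈ I.conc Q
  | .role r t u => (gev I t, gev I u) ∈ I.role r

lemma MinM_sound {T : TBox} {C1 : ℕ} (C2 : ℕ) {a : GAtm} (h : MinM T C1 a) :
    ∀ {α : Type} (I : FOInterp α), CModels I (Translation T C1 C2) → satG I a := by
  induction h with
  | base =>
      intro α I hI
      have hc : ({pcl false C1 .sk0} : Clause) ∈ Translation T C1 C2 := Or.inr (by simp)
      obtain ⟨l, hl, hs⟩ := hI _ hc (fun _ => I.c0)
      rw [Finset.mem_singleton] at hl; subst hl
      simpa [Lit.sat, pcl, Atm.sat, Term.eval, satG, gev] using hs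
  | @subAtom A B b t hT _ ih =>
      intro α I hI
      have hc := clausesOf_subset (C1 := C1) (C2 := C2) hT b rfl
      obtain ⟨l, hl, hs⟩ := hI _ hc (fun _ => gev I t)
      simp only [Finset.mem_insert, Finset.mem_singleton] at hl
      rcases hl with rfl | rfl
      · exact absurd (ih I hI) (by simpa [Lit.sat, ncl, Atm.sat, Term.eval, vx, satG] using hs)
      · simpa [Lit.sat, pcl, Atm.sat, Term.eval, vx, satG] using hs
  | @subConj A₁ A₂ B b t hT _ _ ih₁ ih₂ =>
      intro α I hI
      have hc := clausesOf_subset (C1 := C1) (C2 := C2) hT b rfl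
      obtain ⟨l, hl, hs⟩ := hI _ hc (fun _ => gev I t)
      simp only [Finset.mem_insert, Finset.mem_singleton] at hl
      rcases hl with rfl | rfl | rfl
      · exact absurd (ih₁ I hI) (by simpa [Lit.sat, ncl, Atm.sat, Term.eval, vx, satG] using hs)
      · exact absurd (ih₂ I hI) (by simpa [Lit.sat, ncl, Atm.sat, Term.eval, vx, satG] using hs)
      · simpa [Lit.sat, pcl, Atm.sat, Term.eval, vx, satG] using hs
  | @subEx r A B b t u hT _ _ ihr ihc =>
      intro α I hI
      have hc := clausesOf_subset (C1 := C1) (C2 := C2) hT b rfl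
      obtain ⟨l, hl, hs⟩ := hI _ hc (fun n => if n = 0 then gev I t else gev I u)
      simp only [Finset.mem_insert, Finset.mem_singleton] at hl
      rcases hl with rfl | rfl | rfl
      · exact absurd (ihr I hI)
          (by simpa [Lit.sat, nrl, Atm.sat, Term.eval, vx, vy, satG] using hs)
      · exact absurd (ihc I hI) (by simpa [Lit.sat, ncl, Atm.sat, Term.eval, vy, satG] using hs)
      · simpa [Lit.sat, pcl, Atm.sat, Term.eval, vx, satG] using hs
  | @mkRole A r B b t hT _ ih =>
      intro α I hI
      have hc := clausesOf_subset (C1 := C1) (C2 := C2) hT b (Or.inl rfl)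
      obtain ⟨l, hl, hs⟩ := hI _ hc (fun _ => gev I t)
      simp only [Finset.mem_insert, Finset.mem_singleton] at hl
      rcases hl with rfl | rfl
      · exact absurd (ih I hI) (by simpa [Lit.sat, ncl, Atm.sat, Term.eval, vx, satG] using hs)
      · simpa [Lit.sat, prl, Atm.sat, Term.eval, vx, satG, gev] using hs
  | @mkConc A r B b t hT _ ih =>
      intro α I hI
      have hc := clausesOf_subset (C1 := C1) (C2 := C2) hT b (Or.inr rfl)
      obtain ⟨l, hl, hs⟩ := hI _ hc (fun _ => gev I t)
      simp only [Finset.mem_insert, Finset.mem_singleton] at hl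
      rcases hl with rfl | rfl
      · exact absurd (ih I hI) (by simpa [Lit.sat, ncl, Atm.sat, Term.eval, vx, satG] using hs)
      · simpa [Lit.sat, pcl, Atm.sat, Term.eval, vx, satG, gev] using hs

lemma MinM_transfer {T : TBox} {C1 : ℕ} {sk : SkFun} {t₁ t₂ : GTerm} {A0 r0 B0 : ℕ}
    {P : Bool × ℕ}
    (hsk : sk.2 = (ELConcept.atom A0, ELConcept.ex r0 (.atom B0)))
    (H2 : MinM T C1 (.conc (sk.1, A0) t₂))
    (h : MinM T C1 (.conc P (.app sk t₁))) :
    MinM T C1 (.conc P (.app sk t₂)) := by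
  have := MinM_rep (t₁ := t₁) hsk H2 h (GTerm.Subterm.refl _)
  simpa [GTerm.replaceSuffix] using this

lemma InPIpos_iff {T : TBox} {C1 C2 : ℕ} {P : Bool × ℕ} {u : GTerm} :
    InPIpos Set.univ (Translation T C1 C2) (.conc P u) ↔ MinM T C1 (.conc P u) := by
  constructor
  · intro h
    have hent := h.1.1
    have hsat := hent _ _ (hM_models T C1 C2) (fun _ => GTerm.sk0)
    obtain ⟨l, hl, hs⟩ := hsat
    rw [Finset.mem_singleton] at hl; subst hl
    have : Atm.sat (herb {a | MinM T C1 a}) (fun _ => GTerm.sk0)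
        ((GAtm.conc P u).toAtm) := by simpa [Lit.sat] using hs
    rw [sat_herb, agev_toAtm] at this
    exact this
  · intro h
    refine ⟨⟨?_, ?_⟩, ?_, ?_, ?_⟩
    · -- entailment
      intro α I hI ρ
      refine ⟨_, Finset.mem_singleton_self _, ?_⟩
      have key := MinM_sound C2 h I hI
      simpa [Lit.sat, GAtm.toAtm, Atm.sat, eval_toTerm, satG] using key
    · -- primeness
      intro c' hc' hent
      by_cases hmem : (⟨true, (GAtm.conc P u).toAtm⟩ : Lit) ∈ c'
      · intro α J hJ ρ
        refine ⟨_, hmem, ?_⟩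
        obtain ⟨l, hl, hs⟩ := hJ _ rfl (fun _ => J.c0)
        rw [Finset.mem_singleton] at hl; subst hl
        have key : gev J u ∈ J.conc P := by
          simpa [Lit.sat, GAtm.toAtm, Atm.sat, eval_toTerm] using hs
        simpa [Lit.sat, GAtm.toAtm, Atm.sat, eval_toTerm] using key
      · exfalso
        have h1 : ¬ ClauseSat (herb {a | a ≠ GAtm.conc P u})
            ({⟨true, (GAtm.conc P u).toAtm⟩} : Clause) := by
          intro hsat
          obtain ⟨l, hl, hs⟩ := hsat (fun _ => GTerm.sk0)
          rw [Finset.mem_singleton] at hl; subst hl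
          have : Atm.sat (herb {a | a ≠ GAtm.conc P u}) (fun _ => GTerm.sk0)
              ((GAtm.conc P u).toAtm) := by simpa [Lit.sat] using hs
          rw [sat_herb, agev_toAtm] at this
          exact this rfl
        have h3 : ¬ ClauseSat (herb {a | a ≠ GAtm.conc P u}) c' := by
          intro h
          refine h1 (hent _ _ ?_)
          intro x hx
          rw [Set.mem_singleton_iff] at hx; subst hx; exact h
        unfold ClauseSat at h3
        push_neg at h3
        obtain ⟨ρh, hρh⟩ := h3
        have hpos : ∀ l ∈ c', l.pos = true := by
          by_contra hneg
          push_neg at hneg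
          obtain ⟨l₀, hl₀, hl₀p⟩ := hneg
          have hl₀p' : l₀.pos = false := by
            cases hp : l₀.pos
            · rfl
            · exact absurd hp hl₀p
          have hsat0 : ClauseSat (herb (∅ : Set GAtm)) c' := by
            intro ρ
            refine ⟨l₀, hl₀, ?_⟩
            simp [Lit.sat, hl₀p', sat_herb]
          have := hent _ _ (by
            intro x hx
            rw [Set.mem_singleton_iff] at hx; subst hx; exact hsat0) (fun _ => GTerm.sk0)
          obtain ⟨l, hl, hs⟩ := this
          rw [Finset.mem_singleton] at hl; subst hl
          have : Atm.sat (herb (∅ : Set GAtm)) (fun _ => GTerm.sk0)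
              ((GAtm.conc P u).toAtm) := by simpa [Lit.sat] using hs
          rw [sat_herb] at this
          exact this
        have hshape : ∀ l ∈ c', ∃ w, l = ⟨true, Atm.conc P w⟩ ∧ tgev ρh w = u := by
          intro l hl
          have hns := hρh l hl
          have hp := hpos l hl
          obtain ⟨p, a⟩ := l
          have hp' : p = true := hp
          subst hp'
          have hns' : ¬ Atm.sat (herb {a | a ≠ GAtm.conc P u}) ρh a := by
            simpa [Lit.sat] using hns
          rw [sat_herb] at hns'
          have heq : agev ρh a = GAtm.conc P u := by
            by_contra hne
            exact hns' hne
          cases a with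
          | conc Q w =>
              simp only [agev, GAtm.conc.injEq] at heq
              exact ⟨w, by rw [heq.1], heq.2⟩
          | role r t' u' => simp [agev] at heq
        have hfal : ¬ ClauseSat (herb {a | MinM T C1 a}) c' := by
          intro hsat
          obtain ⟨l, hl, hs⟩ :=
            hsat (fun _ => GTerm.app (true, (ELConcept.top, ELConcept.top)) GTerm.sk0)
          obtain ⟨w, rfl, hwu⟩ := hshape l hl
          have hs' : Atm.sat (herb {a | MinM T C1 a})
              (fun _ => GTerm.app (true, (ELConcept.top, ELConcept.top)) GTerm.sk0)
              (Atm.conc P w) := by simpa [Lit.sat] using hs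
          rw [sat_herb] at hs'
          simp only [agev, Set.mem_setOf_eq] at hs'
          rcases tgev_cases (GTerm.app (true, (ELConcept.top, ELConcept.top)) GTerm.sk0) w with
            ⟨gt, rfl⟩ | hsub
          · rw [tgev_toTerm] at hwu
            subst hwu
            exact hmem hl
          · have hgood : GoodT (tgev
                (fun _ => GTerm.app (true, (ELConcept.top, ELConcept.top)) GTerm.sk0) w) :=
              MinM_good hs'
            exact not_good_garbage (hgood.subterm _ hsub)
        exact hfal (hc' _ _ (hM_models T C1 C2))
    · -- ground
      rw [ClauseGround, Set.eq_empty_iff_forall_notMem]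
      intro x hx
      obtain ⟨l, hl, hxv⟩ := hx
      rw [Finset.mem_singleton] at hl; subst hl
      simp only [GAtm.toAtm, Atm.vars, toTerm_vars] at hxv
      exact hxv
    · -- positive
      intro l hl
      rw [Finset.mem_singleton] at hl; subst hl
      rfl
    · -- in signature
      intro l hl
      rw [Finset.mem_singleton] at hl; subst hl
      simp [GAtm.toAtm, Atm.inSig]

/-- nonempty positive labels of nodes whose Skolem terms share the
same head function coincide. -/
theorem positive_labels_agree
    (T : TBox) (C1 C2 : ℕ) (hNF : NormalForm T)
    (hno : ¬ Entails T (.atom C1) (.atom C2))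
    (F : SkolemTree) (v₁ v₂ : ℕ)
    (sk : SkFun) (t₁ t₂ : GTerm)
    (h1 : F.s v₁ = GTerm.app sk t₁) (h2 : F.s v₂ = GTerm.app sk t₂)
    (hne1 : (posLab (Translation T C1 C2) F v₁).Nonempty)
    (hne2 : (posLab (Translation T C1 C2) F v₂).Nonempty) :
    posLab (Translation T C1 C2) F v₁ = posLab (Translation T C1 C2) F v₂ := by
  have key : ∀ (w₁ w₂ : GTerm) (X : ℕ),
      (∃ A', MinM T C1 (.conc (false, A') (.app sk w₂))) →
      MinM T C1 (.conc (false, X) (.app sk w₁)) →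
      MinM T C1 (.conc (false, X) (.app sk w₂)) := by
    intro w₁ w₂ X hex hX
    obtain ⟨A', hA'⟩ := hex
    obtain ⟨A0, r0, B0, hsk, H1⟩ := MinM_head hX sk w₁ rfl
    obtain ⟨A0', r0', B0', hsk', H2⟩ := MinM_head hA' sk w₂ rfl
    have he := hsk.symm.trans hsk'
    injection he with e1 e2
    injection e1 with e0
    rw [← e0] at H2
    exact MinM_transfer hsk H2 hX
  obtain ⟨A₁, hA₁⟩ := hne1
  obtain ⟨A₂, hA₂⟩ := hne2
  have M1 : MinM T C1 (.conc (false, A₁) (.app sk t₁)) := by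
    have h := hA₁
    simp only [posLab, Set.mem_setOf_eq] at h
    rw [h1] at h
    exact (InPIpos_iff (C2 := C2)).1 h
  have M2 : MinM T C1 (.conc (false, A₂) (.app sk t₂)) := by
    have h := hA₂
    simp only [posLab, Set.mem_setOf_eq] at h
    rw [h2] at h
    exact (InPIpos_iff (C2 := C2)).1 h
  ext A
  simp only [posLab, Set.mem_setOf_eq]
  rw [h1, h2, InPIpos_iff (C2 := C2), InPIpos_iff (C2 := C2)]
  constructor
  · exact key t₁ t₂ A ⟨A₂, M2⟩
  · exact key t₂ t₁ A ⟨A₁, M1⟩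

end ELAbd
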